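/- The natural homomorphism from the amalgamated free product SL₂(ℤ) *_{B(ℤ)} B(ℤ[t]) to E₂(ℤ[t]) — induced by the inclusions SL₂(ℤ) ↪ E₂(ℤ[t]) and B(ℤ[t]) ↪ E₂(ℤ[t]), with edge maps the inclusions B(ℤ) ↪ SL₂(ℤ) and B(ℤ) ↪ B(ℤ[t]) — is an isomorphism of groups. -/

import Mathlib

/-!
Surjectivity: `E₂(ℤ[t])` is generated by the matrices `(1 p; 0 1) ∈ B(ℤ[t])` together with
`w = (0 1; -1 0) ∈ SL₂(ℤ)`, because `w` conjugates `(1 -p; 0 1)` to `(1 0; p 1)`.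

Injectivity is a ping-pong argument on degrees. By the normal form theorem every element of the
amalgam is `b · x₁ ⋯ xₙ` with `b ∈ B(ℤ)` and letters alternating between `SL₂(ℤ) ∖ B(ℤ)`
(constant matrices with nonzero lower-left entry) and `B(ℤ[t]) ∖ B(ℤ)` (upper triangular
with diagonal entries `±1` and nonconstant upper-right entry). A letter of the second kind
makes, in each column, the top entry of strictly larger degree than the bottom one; a letter
of the first kind then moves this dominant entry to the bottom row, where it stays nonzero.
So for `n ≥ 1` the image of `x₁ ⋯ xₙ` is never a constant upper triangular matrix, in
particular never that of `b⁻¹`.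
-/

open Matrix MatrixGroups Polynomial LaurentPolynomial

namespace Paper

variable (R : Type) [CommRing R]

lemma entry00 (A B : SL(2, R)) : (↑(A * B) : Matrix (Fin 2) (Fin 2) R) 0 0
    = A.1 0 0 * B.1 0 0 + A.1 0 1 * B.1 1 0 := by
  simp [Matrix.SpecialLinearGroup.coe_mul, Matrix.mul_apply, Fin.sum_univ_two]

lemma entry01 (A B : SL(2, R)) : (↑(A * B) : Matrix (Fin 2) (Fin 2) R) 0 1
    = A.1 0 0 * B.1 0 1 + A.1 0 1 * B.1 1 1 := by
  simp [Matrix.SpecialLinearGroup.coe_mul, Matrix.mul_apply, Fin.sum_univ_two]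

lemma entry10 (A B : SL(2, R)) : (↑(A * B) : Matrix (Fin 2) (Fin 2) R) 1 0
    = A.1 1 0 * B.1 0 0 + A.1 1 1 * B.1 1 0 := by
  simp [Matrix.SpecialLinearGroup.coe_mul, Matrix.mul_apply, Fin.sum_univ_two]

lemma entry11 (A B : SL(2, R)) : (↑(A * B) : Matrix (Fin 2) (Fin 2) R) 1 1
    = A.1 1 0 * B.1 0 1 + A.1 1 1 * B.1 1 1 := by
  simp [Matrix.SpecialLinearGroup.coe_mul, Matrix.mul_apply, Fin.sum_univ_two]

/-- The subgroup of upper triangular matrices in `SL₂(R)`. -/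
def Bsub : Subgroup (Matrix.SpecialLinearGroup (Fin 2) R) where
  carrier := {A | A.1 1 0 = 0}
  one_mem' := by
    show ((1 : SL(2, R)) : Matrix (Fin 2) (Fin 2) R) 1 0 = 0
    simp [Matrix.SpecialLinearGroup.coe_one, Matrix.one_apply]
  mul_mem' {A B} hA hB := by
    show (↑(A * B) : Matrix (Fin 2) (Fin 2) R) 1 0 = 0
    rw [entry10]
    simp only [Set.mem_setOf_eq] at hA hB
    rw [hA, hB]; ring
  inv_mem' {A} hA := by
    show (↑(A⁻¹) : Matrix (Fin 2) (Fin 2) R) 1 0 = 0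
    rw [Matrix.SpecialLinearGroup.SL2_inv_expl A]
    simp only [Set.mem_setOf_eq] at hA
    simp [hA]

/-- The subgroup of matrices in `SL₂(R[t])` whose lower-left entry is divisible by `t`. -/
def Psub : Subgroup (Matrix.SpecialLinearGroup (Fin 2) (Polynomial R)) where
  carrier := {A | (X : R[X]) ∣ A.1 1 0}
  one_mem' := by
    show (X : R[X]) ∣ ((1 : SL(2, R[X])) : Matrix (Fin 2) (Fin 2) R[X]) 1 0
    simp [Matrix.SpecialLinearGroup.coe_one, Matrix.one_apply]
  mul_mem' {A B} hA hB := by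
    show (X : R[X]) ∣ (↑(A * B) : Matrix (Fin 2) (Fin 2) R[X]) 1 0
    rw [entry10]
    exact dvd_add (hA.mul_right _) (hB.mul_left _)
  inv_mem' {A} hA := by
    show (X : R[X]) ∣ (↑(A⁻¹) : Matrix (Fin 2) (Fin 2) R[X]) 1 0
    rw [Matrix.SpecialLinearGroup.SL2_inv_expl A]
    simp only [Set.mem_setOf_eq] at hA
    simpa using hA.neg_right

/-- The elementary matrix `(1 r; 0 1)`. -/
def elUp (r : R) : SL(2, R) :=
  ⟨!![1, r; 0, 1], by simp [Matrix.det_fin_two_of]⟩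

/-- The elementary matrix `(1 0; r 1)`. -/
def elLow (r : R) : SL(2, R) :=
  ⟨!![1, 0; r, 1], by simp [Matrix.det_fin_two_of]⟩

/-- The subgroup `E₂(R)` of `SL₂(R)` generated by the elementary matrices. -/
def Esub : Subgroup (Matrix.SpecialLinearGroup (Fin 2) R) :=
  Subgroup.closure {A | (∃ r : R, A = elUp R r) ∨ (∃ r : R, A = elLow R r)}

variable {R}

lemma divX_X_mul (p : R[X]) : (X * p).divX = p := by
  ext n
  rw [Polynomial.coeff_divX, Polynomial.coeff_X_mul]

lemma X_mul_divX {p : R[X]} (h : (X : R[X]) ∣ p) : X * p.divX = p := by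
  obtain ⟨c, rfl⟩ := h
  rw [divX_X_mul]

lemma X_mul_cancel {p q : R[X]} (h : X * p = X * q) : p = q := by
  ext n
  have := congrArg (fun r => Polynomial.coeff r (n + 1)) h
  simpa [Polynomial.coeff_X_mul] using this

variable (R)

/-- The matrix underlying `conjP`. -/
noncomputable def conjMat (A : SL(2, R[X])) : Matrix (Fin 2) (Fin 2) R[X] :=
  !![A.1 0 0, X * A.1 0 1; (A.1 1 0).divX, A.1 1 1]

lemma conjMat_det {A : SL(2, R[X])} (hA : (X : R[X]) ∣ A.1 1 0) : (conjMat R A).det = 1 := by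
  rw [conjMat, Matrix.det_fin_two_of]
  have h : X * (A.1 1 0).divX = A.1 1 0 := X_mul_divX hA
  have hd : A.1 0 0 * A.1 1 1 - A.1 0 1 * A.1 1 0 = 1 := by
    rw [← Matrix.det_fin_two]; exact A.2
  calc A.1 0 0 * A.1 1 1 - X * A.1 0 1 * (A.1 1 0).divX
      = A.1 0 0 * A.1 1 1 - A.1 0 1 * (X * (A.1 1 0).divX) := by ring
    _ = 1 := by rw [h]; exact hd

lemma conjMat_mul {A B : SL(2, R[X])} (hA : (X : R[X]) ∣ A.1 1 0)
    (hB : (X : R[X]) ∣ B.1 1 0) :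
    conjMat R (A * B) = conjMat R A * conjMat R B := by
  have h00 : A.1 0 0 * B.1 0 0 + A.1 0 1 * B.1 1 0
      = A.1 0 0 * B.1 0 0 + (X * A.1 0 1) * (B.1 1 0).divX := by
    rw [show (X * A.1 0 1) * (B.1 1 0).divX = A.1 0 1 * (X * (B.1 1 0).divX) by ring,
      X_mul_divX hB]
  have h01 : X * (A.1 0 0 * B.1 0 1 + A.1 0 1 * B.1 1 1)
      = A.1 0 0 * (X * B.1 0 1) + (X * A.1 0 1) * B.1 1 1 := by ring
  have h10 : (A.1 1 0 * B.1 0 0 + A.1 1 1 * B.1 1 0).divX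
      = (A.1 1 0).divX * B.1 0 0 + A.1 1 1 * (B.1 1 0).divX := by
    apply X_mul_cancel
    rw [X_mul_divX (dvd_add (hA.mul_right _) (hB.mul_left _))]
    rw [mul_add,
      show X * ((A.1 1 0).divX * B.1 0 0) = (X * (A.1 1 0).divX) * B.1 0 0 by ring,
      X_mul_divX hA,
      show X * (A.1 1 1 * (B.1 1 0).divX) = A.1 1 1 * (X * (B.1 1 0).divX) by ring,
      X_mul_divX hB]
  have h11 : A.1 1 0 * B.1 0 1 + A.1 1 1 * B.1 1 1
      = (A.1 1 0).divX * (X * B.1 0 1) + A.1 1 1 * B.1 1 1 := by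
    rw [show (A.1 1 0).divX * (X * B.1 0 1) = (X * (A.1 1 0).divX) * B.1 0 1 by ring,
      X_mul_divX hA]
  rw [conjMat, conjMat, conjMat, entry00, entry01, entry10, entry11,
    Matrix.mul_fin_two, h10]
  rw [show (A.1 1 0 * B.1 0 1 + A.1 1 1 * B.1 1 1) = (A.1 1 0).divX * (X * B.1 0 1) + A.1 1 1 * B.1 1 1 from h11]
  rw [show (A.1 0 0 * B.1 0 0 + A.1 0 1 * B.1 1 0) = A.1 0 0 * B.1 0 0 + (X * A.1 0 1) * (B.1 1 0).divX from h00]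
  rw [show X * (A.1 0 0 * B.1 0 1 + A.1 0 1 * B.1 1 1) = A.1 0 0 * (X * B.1 0 1) + (X * A.1 0 1) * B.1 1 1 from h01]

/-- The second edge embedding `P → SL₂(R[t])`, conjugation by `diag(1,t)⁻¹` inside
`SL₂(R[t,t⁻¹])`: `(a, b; t·c, d) ↦ (a, t·b; c, d)`. -/
noncomputable def conjP : ↥(Psub R) →* SL(2, R[X]) where
  toFun A := ⟨conjMat R A.1, conjMat_det R A.2⟩
  map_one' := by
    apply Subtype.ext
    show conjMat R 1 = 1
    rw [conjMat]
    have h00 : ((1 : SL(2, R[X])) : Matrix (Fin 2) (Fin 2) R[X]) 0 0 = 1 := by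
      rw [Matrix.SpecialLinearGroup.coe_one]; simp [Matrix.one_apply]
    have h01 : ((1 : SL(2, R[X])) : Matrix (Fin 2) (Fin 2) R[X]) 0 1 = 0 := by
      rw [Matrix.SpecialLinearGroup.coe_one]; simp [Matrix.one_apply]
    have h10 : ((1 : SL(2, R[X])) : Matrix (Fin 2) (Fin 2) R[X]) 1 0 = 0 := by
      rw [Matrix.SpecialLinearGroup.coe_one]; simp [Matrix.one_apply]
    have h11 : ((1 : SL(2, R[X])) : Matrix (Fin 2) (Fin 2) R[X]) 1 1 = 1 := by
      rw [Matrix.SpecialLinearGroup.coe_one]; simp [Matrix.one_apply]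
    rw [h00, h01, h10, h11, mul_zero, Polynomial.divX_zero, ← Matrix.one_fin_two]
  map_mul' A B := by
    apply Subtype.ext
    show conjMat R (A.1 * B.1) = conjMat R A.1 * conjMat R B.1
    exact conjMat_mul R A.2 B.2

/-- The diagonal matrix `diag(1, t)` as a unit of the ring of 2×2 matrices over `R[t,t⁻¹]`. -/
noncomputable def DT : (Matrix (Fin 2) (Fin 2) (LaurentPolynomial R))ˣ where
  val := Matrix.diagonal ![1, LaurentPolynomial.T 1]
  inv := Matrix.diagonal ![1, LaurentPolynomial.T (-1)]
  val_inv := by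
    rw [Matrix.diagonal_mul_diagonal]
    have : (fun i => (![1, LaurentPolynomial.T 1] : Fin 2 → LaurentPolynomial R) i *
        ![1, LaurentPolynomial.T (-1)] i) = fun _ => (1 : LaurentPolynomial R) := by
      funext i
      fin_cases i
      · simp
      · show LaurentPolynomial.T 1 * LaurentPolynomial.T (-1) = 1
        rw [← LaurentPolynomial.T_add]; simp
    rw [this, Matrix.diagonal_one]
  inv_val := by
    rw [Matrix.diagonal_mul_diagonal]
    have : (fun i => (![1, LaurentPolynomial.T (-1)] : Fin 2 → LaurentPolynomial R) i *
        ![1, LaurentPolynomial.T 1] i) = fun _ => (1 : LaurentPolynomial R) := by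
      funext i
      fin_cases i
      · simp
      · show LaurentPolynomial.T (-1) * LaurentPolynomial.T 1 = 1
        rw [← LaurentPolynomial.T_add]; simp
    rw [this, Matrix.diagonal_one]

lemma DT_conj_det (M : Matrix (Fin 2) (Fin 2) (LaurentPolynomial R)) :
    (((DT R) : Matrix (Fin 2) (Fin 2) (LaurentPolynomial R)) * M * ((DT R)⁻¹).val).det = M.det := by
  rw [Matrix.det_mul, Matrix.det_mul]
  have h : ((DT R) : Matrix (Fin 2) (Fin 2) (LaurentPolynomial R)).det *
      ((DT R)⁻¹ : (Matrix (Fin 2) (Fin 2) (LaurentPolynomial R))ˣ).1.det = 1 := by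
    rw [← Matrix.det_mul, Units.mul_inv, Matrix.det_one]
  calc ((DT R) : Matrix (Fin 2) (Fin 2) (LaurentPolynomial R)).det * M.det * (((DT R)⁻¹).val).det
      = ((DT R) : Matrix (Fin 2) (Fin 2) (LaurentPolynomial R)).det * (((DT R)⁻¹).val).det * M.det := by ring
    _ = M.det := by rw [h, one_mul]

/-- The homomorphism `i₂ : SL₂(R[t]) → SL₂(R[t,t⁻¹])`, `A ↦ diag(1,t)·A·diag(1,t⁻¹)`. -/
noncomputable def i₂SL : SL(2, Polynomial R) →* SL(2, LaurentPolynomial R) where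
  toFun A := ⟨(DT R : Matrix (Fin 2) (Fin 2) (LaurentPolynomial R)) *
      A.1.map Polynomial.toLaurent * ↑(DT R)⁻¹, by
    rw [DT_conj_det]
    have : (A.1.map (Polynomial.toLaurent : R[X] → LaurentPolynomial R)).det
        = Polynomial.toLaurent A.1.det := by
      rw [← RingHom.mapMatrix_apply, ← RingHom.map_det]
    rw [this, A.2, _root_.map_one]⟩
  map_one' := by
    apply Subtype.ext
    show (DT R : Matrix (Fin 2) (Fin 2) (LaurentPolynomial R)) *
      ((1 : SL(2, R[X])).1.map Polynomial.toLaurent) * ((DT R)⁻¹).val = 1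
    rw [Matrix.SpecialLinearGroup.coe_one]
    rw [show ((1 : Matrix (Fin 2) (Fin 2) R[X]).map (Polynomial.toLaurent : R[X] → _)) = 1 from
      Matrix.map_one _ (map_zero _) (map_one _)]
    rw [mul_one, Units.mul_inv]
  map_mul' A B := by
    apply Subtype.ext
    show (DT R : Matrix (Fin 2) (Fin 2) (LaurentPolynomial R)) *
        ((A * B).1.map Polynomial.toLaurent) * ((DT R)⁻¹).val = _
    rw [Matrix.SpecialLinearGroup.coe_mul]
    rw [show ((A.1 * B.1).map (Polynomial.toLaurent : R[X] → _))
        = A.1.map Polynomial.toLaurent * B.1.map Polynomial.toLaurent from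
      Matrix.map_mul]
    show _ = ((DT R : Matrix (Fin 2) (Fin 2) (LaurentPolynomial R)) *
        A.1.map Polynomial.toLaurent * ((DT R)⁻¹).val) *
      ((DT R : Matrix (Fin 2) (Fin 2) (LaurentPolynomial R)) *
        B.1.map Polynomial.toLaurent * ((DT R)⁻¹).val)
    simp only [mul_assoc, Units.inv_mul_cancel_left]

end Paper
namespace Paper

variable (R : Type) [CommRing R]

def wSL : SL(2, R) := ⟨!![0, 1; -1, 0], by simp [Matrix.det_fin_two_of]⟩

/-- `-1` in `SL₂`. -/
def negI : SL(2, R) := ⟨-1, by simp [Matrix.det_fin_two]⟩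

variable {R}

lemma elUp_mul (r s : R) : elUp R r * elUp R s = elUp R (r + s) := by
  apply Subtype.ext
  show (elUp R r).1 * (elUp R s).1 = _
  simp [elUp, Matrix.mul_fin_two]
  ring_nf

lemma elUp_mem (r : R) : elUp R r ∈ Esub R := Subgroup.subset_closure (Or.inl ⟨r, rfl⟩)
lemma elLow_mem (r : R) : elLow R r ∈ Esub R := Subgroup.subset_closure (Or.inr ⟨r, rfl⟩)

lemma w_eq : elUp R 1 * elLow R (-1) * elUp R 1 = wSL R := by
  apply Subtype.ext
  show (elUp R 1).1 * (elLow R (-1)).1 * (elUp R 1).1 = _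
  simp [elUp, elLow, wSL, Matrix.mul_fin_two]

lemma negI_eq : wSL R * wSL R = negI R := by
  apply Subtype.ext
  show (!![0, 1; -1, 0] : Matrix (Fin 2) (Fin 2) R) * !![0, 1; -1, 0] = (-1 : Matrix (Fin 2) (Fin 2) R)
  rw [Matrix.mul_fin_two]
  ext i j
  fin_cases i <;> fin_cases j <;> simp [Matrix.one_apply]

lemma wSL_mem : wSL R ∈ Esub R := by
  rw [← w_eq]
  exact Subgroup.mul_mem _ (Subgroup.mul_mem _ (elUp_mem 1) (elLow_mem (-1))) (elUp_mem 1)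

lemma negI_mem : (negI R : SL(2,R)) ∈ Esub R := by
  rw [← negI_eq]; exact Subgroup.mul_mem _ wSL_mem wSL_mem

end Paper
namespace Paper

lemma natAbs_emod_lt {a c : ℤ} (h : c ≠ 0) : (a % c).natAbs < c.natAbs := by
  have h1 : 0 ≤ a % c := Int.emod_nonneg a h
  have h2 : a % |c| < |c| := Int.emod_lt_of_pos a (abs_pos.mpr h)
  rw [Int.emod_abs] at h2
  have : |c| = c.natAbs := Int.abs_eq_natAbs c
  omega

/-- `SL₂(ℤ)` is generated by the elementary matrices. -/
theorem SL2Z_mem_Esub (A : SL(2, ℤ)) : A ∈ Esub ℤ := by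
  suffices H : ∀ n : ℕ, ∀ A : SL(2, ℤ), (A.1 1 0).natAbs = n → A ∈ Esub ℤ from H _ A rfl
  intro n
  induction n using Nat.strong_induction_on with
  | _ n ih =>
    intro A
    induction A using Matrix.SpecialLinearGroup.fin_two_induction with
    | _ a b c d hdet =>
      intro hc
      have hc' : c.natAbs = n := by simpa using hc
      by_cases h0 : c = 0
      · subst h0
        have had : a * d = 1 := by linarith [hdet]
        rcases Int.mul_eq_one_iff_eq_one_or_neg_one.mp had with ⟨ha, hd⟩ | ⟨ha, hd⟩
        · subst ha; subst hd
          have : (⟨!![1, b; 0, 1], by rwa [Matrix.det_fin_two_of]⟩ : SL(2, ℤ)) = elUp ℤ b :=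
            Subtype.ext rfl
          rw [this]
          exact elUp_mem b
        · subst ha; subst hd
          have : (⟨!![-1, b; 0, -1], by rwa [Matrix.det_fin_two_of]⟩ : SL(2, ℤ))
              = negI ℤ * elUp ℤ (-b) := by
            apply Subtype.ext
            show !![(-1 : ℤ), b; 0, -1] = (negI ℤ).1 * (elUp ℤ (-b)).1
            show !![(-1 : ℤ), b; 0, -1] = (-1 : Matrix (Fin 2) (Fin 2) ℤ) * !![1, -b; 0, 1]
            rw [neg_one_mul]
            ext i j
            fin_cases i <;> fin_cases j <;> simp
          rw [this]
          exact Subgroup.mul_mem _ negI_mem (elUp_mem (-b))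
      · -- inductive step
        set A' : SL(2, ℤ) := ⟨!![a, b; c, d], by rwa [Matrix.det_fin_two_of]⟩ with hA'
        set N : SL(2, ℤ) := wSL ℤ * elUp ℤ (-(a / c)) with hN
        have hNcoe : (N : Matrix (Fin 2) (Fin 2) ℤ) = !![0, 1; -1, a / c] := by
          show (!![0, 1; -1, 0] : Matrix (Fin 2) (Fin 2) ℤ) * !![1, -(a / c); 0, 1] = _
          rw [Matrix.mul_fin_two]
          norm_num
        have hentry : ((N * A').1) 1 0 = -(a % c) := by
          rw [entry10, hNcoe]
          have e1 : (!![(0 : ℤ), 1; -1, a / c]) 1 0 = -1 := by simp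
          have e2 : (!![(0 : ℤ), 1; -1, a / c]) 1 1 = a / c := by simp
          have e3 : (A'.1) 0 0 = a := by simp [hA']
          have e4 : (A'.1) 1 0 = c := by simp [hA']
          rw [e1, e2, e3, e4, Int.emod_def]
          ring
        have hlt : (((N * A').1) 1 0).natAbs < n := by
          rw [hentry]
          rw [Int.natAbs_neg]
          rw [← hc']
          exact natAbs_emod_lt h0
        have hNA : N * A' ∈ Esub ℤ := ih _ hlt (N * A') rfl
        have hNmem : N ∈ Esub ℤ := Subgroup.mul_mem _ wSL_mem (elUp_mem _)
        have heq : A' = N⁻¹ * (N * A') := by group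
        rw [heq]
        exact Subgroup.mul_mem _ (Subgroup.inv_mem _ hNmem) hNA

end Paper
namespace Paper

variable {R S : Type} [CommRing R] [CommRing S]

lemma map_coe (f : R →+* S) (A : SL(2, R)) :
    ((Matrix.SpecialLinearGroup.map f A) : Matrix (Fin 2) (Fin 2) S) = A.1.map f := rfl

lemma map_entry (f : R →+* S) (A : SL(2, R)) (i j : Fin 2) :
    (Matrix.SpecialLinearGroup.map f A).1 i j = f (A.1 i j) := by
  rw [map_coe, Matrix.map_apply]

lemma map_elUp (f : R →+* S) (r : R) :
    Matrix.SpecialLinearGroup.map f (elUp R r) = elUp S (f r) := by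
  apply Subtype.ext
  rw [map_coe]
  show (!![1, r; 0, 1] : Matrix (Fin 2) (Fin 2) R).map f = !![1, f r; 0, 1]
  ext i j
  fin_cases i <;> fin_cases j <;> simp [Matrix.map_apply]

lemma map_elLow (f : R →+* S) (r : R) :
    Matrix.SpecialLinearGroup.map f (elLow R r) = elLow S (f r) := by
  apply Subtype.ext
  rw [map_coe]
  show (!![1, 0; r, 1] : Matrix (Fin 2) (Fin 2) R).map f = !![1, 0; f r, 1]
  ext i j
  fin_cases i <;> fin_cases j <;> simp [Matrix.map_apply]

lemma map_Esub_le (f : R →+* S) :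
    (Esub R).map (Matrix.SpecialLinearGroup.map f) ≤ Esub S := by
  rw [Esub, MonoidHom.map_closure]
  rw [Subgroup.closure_le]
  rintro _ ⟨A, hA, rfl⟩
  rcases hA with ⟨r, rfl⟩ | ⟨r, rfl⟩
  · rw [map_elUp]; exact elUp_mem _
  · rw [map_elLow]; exact elLow_mem _

lemma elUp_zero : elUp R 0 = 1 := by
  apply Subtype.ext
  show !![1, (0 : R); 0, 1] = 1
  rw [← Matrix.one_fin_two]

/-- The upper triangular subgroup of `SL₂(ℤ[t])` is contained in `E₂(ℤ[t])`. -/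
lemma Bsub_polyZ_le_Esub : Bsub (Polynomial ℤ) ≤ Esub (Polynomial ℤ) := by
  intro A hA
  have h10 : A.1 1 0 = 0 := hA
  have hdet : A.1 0 0 * A.1 1 1 = 1 := by
    have h := A.2
    rw [Matrix.det_fin_two, h10, mul_zero, sub_zero] at h
    exact h
  obtain ⟨u, hu1, hu2⟩ := Polynomial.isUnit_iff.mp (IsUnit.of_mul_eq_one _ hdet)
  rcases Int.isUnit_iff.mp hu1 with h1 | h1
  · -- a = 1
    have h00 : A.1 0 0 = 1 := by rw [← hu2, h1]; simp
    have h11 : A.1 1 1 = 1 := by rw [h00, one_mul] at hdet; exact hdet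
    have : A = elUp (Polynomial ℤ) (A.1 0 1) := by
      apply Subtype.ext
      show A.1 = !![1, A.1 0 1; 0, 1]
      conv_lhs => rw [Matrix.eta_fin_two A.1]
      rw [h00, h10, h11]
    rw [this]
    exact elUp_mem _
  · -- a = -1
    have h00 : A.1 0 0 = -1 := by rw [← hu2, h1]; simp
    have h11 : A.1 1 1 = -1 := by
      have := hdet
      rw [h00] at this
      linear_combination -this
    have : A = negI (Polynomial ℤ) * elUp (Polynomial ℤ) (-(A.1 0 1)) := by
      apply Subtype.ext
      show A.1 = (-1 : Matrix (Fin 2) (Fin 2) (Polynomial ℤ)) * !![1, -(A.1 0 1); 0, 1]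
      rw [neg_one_mul]
      conv_lhs => rw [Matrix.eta_fin_two A.1]
      rw [h00, h10, h11]
      ext i j
      fin_cases i <;> fin_cases j <;> simp
    rw [this]
    exact Subgroup.mul_mem _ negI_mem (elUp_mem _)

/-- The inclusion `SL₂(ℤ) ↪ E₂(ℤ[t])` induced by constant polynomials. -/
noncomputable def SLZtoE : SL(2, ℤ) →* ↥(Esub (Polynomial ℤ)) :=
  (Matrix.SpecialLinearGroup.map (Polynomial.C : ℤ →+* Polynomial ℤ)).codRestrict
    (Esub (Polynomial ℤ))
    (fun A => map_Esub_le _ ⟨A, SL2Z_mem_Esub A, rfl⟩)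

/-- The inclusion `B(ℤ) ↪ B(ℤ[t])` induced by constant polynomials. -/
noncomputable def BZtoBZX : ↥(Bsub ℤ) →* ↥(Bsub (Polynomial ℤ)) :=
  ((Matrix.SpecialLinearGroup.map (Polynomial.C : ℤ →+* Polynomial ℤ)).comp
      (Bsub ℤ).subtype).codRestrict (Bsub (Polynomial ℤ))
    (fun A => by
      show (Matrix.SpecialLinearGroup.map (Polynomial.C : ℤ →+* Polynomial ℤ) A.1).1 1 0 = 0
      rw [map_entry]
      have h : A.1.1 1 0 = 0 := A.2
      rw [h, map_zero])

/-- The inclusion `B(ℤ[t]) ↪ E₂(ℤ[t])`. -/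
noncomputable def BZXtoE : ↥(Bsub (Polynomial ℤ)) →* ↥(Esub (Polynomial ℤ)) :=
  Subgroup.inclusion Bsub_polyZ_le_Esub

end Paper

namespace Paper

/-- The two vertex groups `SL₂(ℤ)` and `B(ℤ[t])`. -/
noncomputable def fam910 : Bool → Type
  | true => SL(2, ℤ)
  | false => ↥(Bsub (Polynomial ℤ))

noncomputable instance (b : Bool) : Group (fam910 b) := by
  cases b <;> (dsimp [fam910]; infer_instance)

/-- The edge embeddings of `B(ℤ)` into the two vertex groups. -/
noncomputable def edges910 : (b : Bool) → ↥(Bsub ℤ) →* fam910 b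
  | true => (Bsub ℤ).subtype
  | false => BZtoBZX

/-- The inclusions of the two vertex groups into `E₂(ℤ[t])`. -/
noncomputable def legs910 : (b : Bool) → fam910 b →* ↥(Esub (Polynomial ℤ))
  | true => SLZtoE
  | false => BZXtoE

lemma compat910 : ∀ b, (legs910 b).comp (edges910 b) = SLZtoE.comp (Bsub ℤ).subtype := by
  intro b
  cases b
  · exact MonoidHom.ext fun A => Subtype.ext rfl
  · rfl

end Paper

namespace Monoid.PushoutI

open CoprodI

variable {ι : Type*} {G : ι → Type*} {H K : Type*} [∀ i, Group (G i)] [Group H] [Group K]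
  {φ : ∀ i, H →* G i}

theorem exists_reduced_base_mul_ofCoprodI_eq (hφ : ∀ i, Function.Injective (φ i))
    (g : PushoutI φ) : ∃ (h : H) (w : Word G), Reduced φ w ∧ base φ h * ofCoprodI w.prod = g := by
  classical
  obtain ⟨d⟩ := NormalWord.transversal_nonempty φ hφ
  let w : NormalWord d := g • NormalWord.empty
  refine ⟨w.head, w.toWord, fun ⟨i, x⟩ hx hxφ => w.ne_one _ hx ?_, ?_⟩
  · have hxd : x ∈ d.set i := w.normalized i x hx
    have := (d.compl i).1 (a₁ := (⟨x, hxφ⟩, ⟨1, d.one_mem i⟩)) (a₂ := (⟨1, one_mem _⟩, ⟨x, hxd⟩))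
      (by simp)
    simpa using (congrArg (fun p => (p.2 : G i)) this).symm
  · have := NormalWord.prod_smul g (NormalWord.empty : NormalWord d)
    rwa [NormalWord.prod_empty, mul_one] at this

variable (f : PushoutI φ →* K) (P : ι → K → Prop)

theorem Reduced.ping_pong_prod
    (hletter : ∀ i (g : G i), g ∉ (φ i).range → P i (f (of i g)))
    (hmul : ∀ i j, i ≠ j → ∀ g : G i, g ∉ (φ i).range → ∀ k, P j k → P i (f (of i g) * k))
    {w : Word G} (hw : Reduced φ w) {i : ι} (hi : w.fstIdx = some i) :
    P i (f (ofCoprodI w.prod)) := by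
  induction w using Word.consRecOn generalizing i with
  | empty => simp [Word.fstIdx, Word.empty] at hi
  | cons j g w hwj hg ih =>
    obtain rfl : j = i := by simpa [Word.fstIdx_cons] using hi
    have hgφ : g ∉ (φ j).range := hw ⟨j, g⟩ List.mem_cons_self
    have hw' : Reduced φ w := fun l hl => hw l (List.mem_cons_of_mem _ hl)
    rw [Word.prod_cons, map_mul, map_mul, ofCoprodI_of]
    cases w using Word.consRecOn with
    | empty => simpa using hletter j g hgφ
    | cons k g' w' hw'k hg' =>
      have hkj : k ≠ j := fun h => hwj (by rw [Word.fstIdx_cons, h])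
      exact hmul j k hkj.symm g hgφ _ (ih hw' (Word.fstIdx_cons _ _ _ _))

theorem lift_injective_of_ping_pong (hφ : ∀ i, Function.Injective (φ i))
    (hbase : Function.Injective (f.comp (base φ)))
    (hbase_not : ∀ i h, ¬ P i (f (base φ h)))
    (hletter : ∀ i (g : G i), g ∉ (φ i).range → P i (f (of i g)))
    (hmul : ∀ i j, i ≠ j → ∀ g : G i, g ∉ (φ i).range → ∀ k, P j k → P i (f (of i g) * k)) :
    Function.Injective f := by
  rw [injective_iff_map_eq_one]
  intro g hg
  obtain ⟨h, w, hw, rfl⟩ := exists_reduced_base_mul_ofCoprodI_eq hφ g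
  rw [map_mul] at hg
  cases w using Word.consRecOn with
  | empty =>
    obtain rfl : h = 1 := hbase (by simpa using hg)
    simp
  | cons i x w hwi hx =>
    refine absurd ?_ (hbase_not i h⁻¹)
    rw [map_inv, map_inv, ← eq_inv_of_mul_eq_one_right hg]
    exact hw.ping_pong_prod f P hletter hmul (Word.fstIdx_cons _ _ _ _)

end Monoid.PushoutI

namespace Matrix.SpecialLinearGroup

variable {n R S : Type*} [Fintype n] [DecidableEq n] [CommRing R] [CommRing S]

theorem map_injective {f : R →+* S} (hf : Function.Injective f) :
    Function.Injective (map (n := n) f) :=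
  fun _ _ h => Subtype.ext (Matrix.map_injective hf (congrArg Subtype.val h))

end Matrix.SpecialLinearGroup

namespace Polynomial

variable {R : Type*} [CommRing R]

lemma degree_mul_le_of_degree_le_zero {p x : R[X]} (hp : p.degree ≤ 0) :
    (p * x).degree ≤ x.degree :=
  (degree_mul_le p x).trans (by simpa using add_le_add_left hp x.degree)

lemma degree_mul_add_le {p q x y : R[X]} (hp : p.degree ≤ 0) (hq : q.degree ≤ 0)
    (h : y.degree ≤ x.degree) : (p * x + q * y).degree ≤ x.degree :=
  (degree_add_le _ _).trans
    (max_le (degree_mul_le_of_degree_le_zero hp) ((degree_mul_le_of_degree_le_zero hq).trans h))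

lemma degree_mul_add_eq [NoZeroDivisors R] {r s x y : R[X]} (hr : r.degree = 0)
    (hs : s.degree ≤ 0) (h : y.degree < x.degree) : (r * x + s * y).degree = x.degree := by
  have hrx : (r * x).degree = x.degree := by rw [degree_mul, hr, zero_add]
  rw [degree_add_eq_left_of_degree_lt (hrx ▸ (degree_mul_le_of_degree_le_zero hs).trans_lt h), hrx]

lemma degree_lt_degree_mul_of_natDegree_pos [NoZeroDivisors R] {b y : R[X]}
    (hb : 0 < b.natDegree) (hy : y ≠ 0) :
    y.degree < (b * y).degree := by
  have hb0 : b ≠ 0 := ne_zero_of_natDegree_gt hb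
  rw [degree_eq_natDegree hy, degree_eq_natDegree (mul_ne_zero hb0 hy), natDegree_mul hb0 hy]
  exact_mod_cast by omega

lemma degree_mul_lt_degree_mul_add [IsDomain R] {a b d x y : R[X]} (ha : IsUnit a)
    (hd : IsUnit d) (hb : 0 < b.natDegree) (hxy : x ≠ 0 ∨ y ≠ 0) (h : y ≠ 0 → x.degree ≤ y.degree) :
    (d * y).degree < (a * x + b * y).degree := by
  by_cases hy : y = 0
  · subst hy
    simpa [bot_lt_iff_ne_bot, ha.ne_zero] using hxy
  have hby := degree_lt_degree_mul_of_natDegree_pos hb hy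
  rw [degree_add_eq_right_of_degree_lt, degree_mul, degree_eq_zero_of_isUnit hd, zero_add]
  · exact hby
  · rw [degree_mul, degree_eq_zero_of_isUnit ha, zero_add]
    exact (h hy).trans_lt hby

end Polynomial

namespace Paper

section SL2

variable {R S : Type} [CommRing R] [CommRing S]

lemma SL2_mul_apply (A B : SL(2, R)) (i j : Fin 2) :
    (A * B).1 i j = A.1 i 0 * B.1 0 j + A.1 i 1 * B.1 1 j := by
  simp [Matrix.SpecialLinearGroup.coe_mul, Matrix.mul_apply, Fin.sum_univ_two]

lemma SL2_col_ne_zero [Nontrivial R] (A : SL(2, R)) (j : Fin 2) :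
    A.1 0 j ≠ 0 ∨ A.1 1 j ≠ 0 := by
  by_contra! h
  have hdet := A.2
  rw [Matrix.det_fin_two] at hdet
  fin_cases j <;> simp_all

lemma mem_Bsub_iff {A : SL(2, R)} : A ∈ Bsub R ↔ A.1 1 0 = 0 := Iff.rfl

lemma mul_diag_eq_one_of_mem_Bsub {A : SL(2, R)} (hA : A ∈ Bsub R) :
    A.1 0 0 * A.1 1 1 = 1 := by
  have hdet := A.2
  rwa [Matrix.det_fin_two, mem_Bsub_iff.mp hA, mul_zero, sub_zero] at hdet

lemma elUp_mem_Bsub (r : R) : elUp R r ∈ Bsub R := by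
  rw [mem_Bsub_iff]; simp [elUp]

lemma elLow_eq_conj_elUp (r : R) : elLow R r = wSL R * elUp R (-r) * (wSL R)⁻¹ := by
  rw [eq_comm, mul_inv_eq_iff_eq_mul]
  apply Subtype.ext
  show (wSL R).1 * (elUp R (-r)).1 = (elLow R r).1 * (wSL R).1
  simp [wSL, elUp, elLow]

lemma map_wSL (f : R →+* S) : Matrix.SpecialLinearGroup.map f (wSL R) = wSL S := by
  apply Subtype.ext
  rw [map_coe]
  ext i j
  fin_cases i <;> fin_cases j <;> simp [wSL]

end SL2

section Dominance

variable {R : Type} [CommRing R]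

/-- The state reached after a reduced word starting with a letter of `SL₂(ℤ) ∖ B(ℤ)`. -/
def LowerDominant (M : SL(2, R[X])) : Prop :=
  M.1 1 0 ≠ 0 ∧ ∀ j, M.1 1 j ≠ 0 → (M.1 0 j).degree ≤ (M.1 1 j).degree

/-- The state reached after a reduced word starting with a letter of `B(ℤ[t]) ∖ B(ℤ)`. -/
def UpperDominant (M : SL(2, R[X])) : Prop :=
  ∀ j, (M.1 1 j).degree < (M.1 0 j).degree

lemma lowerDominant_map_C {A : SL(2, R)} (hA : A.1 1 0 ≠ 0) :
    LowerDominant (SpecialLinearGroup.map Polynomial.C A) := by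
  refine ⟨by simpa [map_entry] using hA, fun j hj => ?_⟩
  simp only [map_entry] at hj ⊢
  exact degree_C_le.trans (zero_le_degree_iff.mpr hj)

lemma lowerDominant_map_C_mul [IsDomain R] {A : SL(2, R)} (hA : A.1 1 0 ≠ 0)
    {M : SL(2, R[X])} (hM : UpperDominant M) :
    LowerDominant (SpecialLinearGroup.map Polynomial.C A * M) := by
  have hbottom : ∀ j, ((SpecialLinearGroup.map Polynomial.C A * M).1 1 j).degree =
      (M.1 0 j).degree := fun j => by
    rw [SL2_mul_apply, map_entry, map_entry]
    exact degree_mul_add_eq (degree_C hA) degree_C_le (hM j)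
  refine ⟨fun h => ?_, fun j _ => ?_⟩
  · have h0 := hbottom 0
    rw [h, Polynomial.degree_zero] at h0
    exact not_lt_bot (h0 ▸ hM 0)
  · rw [hbottom, SL2_mul_apply, map_entry, map_entry]
    exact degree_mul_add_le degree_C_le degree_C_le (hM j).le

lemma upperDominant_mul [IsDomain R] {U M : SL(2, R[X])} (hU : U ∈ Bsub R[X])
    (hU01 : 0 < (U.1 0 1).natDegree)
    (hM : ∀ j, M.1 1 j ≠ 0 → (M.1 0 j).degree ≤ (M.1 1 j).degree) : UpperDominant (U * M) := by
  have hdiag := mul_diag_eq_one_of_mem_Bsub hU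
  intro j
  rw [SL2_mul_apply, SL2_mul_apply, mem_Bsub_iff.mp hU, zero_mul, zero_add]
  exact degree_mul_lt_degree_mul_add (.of_mul_eq_one _ hdiag) (.of_mul_eq_one_right _ hdiag)
    hU01 (SL2_col_ne_zero M j) (hM j)

lemma upperDominant_of_mem_Bsub [IsDomain R] {U : SL(2, R[X])} (hU : U ∈ Bsub R[X])
    (hU01 : 0 < (U.1 0 1).natDegree) : UpperDominant U := by
  simpa using upperDominant_mul (M := 1) hU hU01 fun j => by fin_cases j <;> simp

lemma not_upperDominant_map_C [IsDomain R] {A : SL(2, R)} (hA : A ∈ Bsub R) :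
    ¬ UpperDominant (SpecialLinearGroup.map Polynomial.C A) := by
  intro h
  have h1 := h 1
  rw [map_entry, map_entry, Polynomial.degree_C (right_ne_zero_of_mul_eq_one
    (mul_diag_eq_one_of_mem_Bsub hA))] at h1
  exact (h1.trans_le degree_C_le).false

lemma map_C_map_constantCoeff {M : SL(2, R[X])} (hM : ∀ i j, (M.1 i j).natDegree = 0) :
    SpecialLinearGroup.map Polynomial.C
      (SpecialLinearGroup.map constantCoeff M) = M := by
  refine Matrix.SpecialLinearGroup.ext _ _ fun i j => ?_
  rw [map_entry, map_entry, constantCoeff_apply]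
  exact (eq_C_of_natDegree_eq_zero (hM i j)).symm

end Dominance

lemma natDegree_pos_of_not_mem_range_BZtoBZX {U : ↥(Bsub ℤ[X])} (hU : U ∉ BZtoBZX.range) :
    0 < (U.1.1 0 1).natDegree := by
  have hdiag := mul_diag_eq_one_of_mem_Bsub U.2
  by_contra! h
  have hconst : ∀ i j, (U.1.1 i j).natDegree = 0 := fun i j => by
    fin_cases i <;> fin_cases j
    · exact natDegree_eq_zero_of_isUnit (.of_mul_eq_one _ hdiag)
    · exact Nat.le_zero.mp h
    · simp [mem_Bsub_iff.mp U.2]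
    · exact natDegree_eq_zero_of_isUnit (.of_mul_eq_one_right _ hdiag)
  refine hU ⟨⟨SpecialLinearGroup.map constantCoeff U.1, ?_⟩, ?_⟩
  · simp [mem_Bsub_iff, map_entry, mem_Bsub_iff.mp U.2]
  · exact Subtype.ext (map_C_map_constantCoeff hconst)

lemma edges910_injective : ∀ b, Function.Injective (edges910 b)
  | true => Subtype.val_injective
  | false => fun _ _ h => Subtype.ext <|
      Matrix.SpecialLinearGroup.map_injective Polynomial.C_injective (congrArg (fun A => A.1) h)

noncomputable abbrev amalgamHom : Monoid.PushoutI edges910 →* ↥(Esub ℤ[X]) :=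
  Monoid.PushoutI.lift legs910 (SLZtoE.comp (Bsub ℤ).subtype) compat910

lemma coe_amalgamHom_base (h : ↥(Bsub ℤ)) :
    (amalgamHom (Monoid.PushoutI.base edges910 h) : SL(2, ℤ[X])) =
      SpecialLinearGroup.map Polynomial.C h.1 := by
  rw [Monoid.PushoutI.lift_base]; rfl

lemma amalgamHom_comp_base_injective :
    Function.Injective (amalgamHom.comp (Monoid.PushoutI.base edges910)) :=
  fun x y h => Subtype.ext <| Matrix.SpecialLinearGroup.map_injective Polynomial.C_injective <| by
    rw [← coe_amalgamHom_base, ← coe_amalgamHom_base]; exact congrArg (fun k => k.1) h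

def pingPongState : Bool → ↥(Esub ℤ[X]) → Prop
  | true, k => LowerDominant (k : SL(2, ℤ[X]))
  | false, k => UpperDominant (k : SL(2, ℤ[X]))

lemma not_pingPongState_amalgamHom_base :
    ∀ b h, ¬ pingPongState b (amalgamHom (Monoid.PushoutI.base edges910 h))
  | true, h => fun hS => hS.1 (by
      rw [coe_amalgamHom_base, map_entry, mem_Bsub_iff.mp h.2, map_zero])
  | false, h => by
    simpa only [pingPongState, coe_amalgamHom_base] using not_upperDominant_map_C h.2

lemma pingPongState_amalgamHom_of : ∀ b (g : fam910 b), g ∉ (edges910 b).range →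
    pingPongState b (amalgamHom (Monoid.PushoutI.of b g))
  | true, g, hg => by
    rw [Monoid.PushoutI.lift_of]
    exact lowerDominant_map_C fun h => hg ⟨⟨g, h⟩, rfl⟩
  | false, g, hg => by
    rw [Monoid.PushoutI.lift_of]
    exact upperDominant_of_mem_Bsub g.2 (natDegree_pos_of_not_mem_range_BZtoBZX hg)

lemma pingPongState_amalgamHom_of_mul : ∀ b b', b ≠ b' → ∀ g : fam910 b,
    g ∉ (edges910 b).range → ∀ k, pingPongState b' k →
      pingPongState b (amalgamHom (Monoid.PushoutI.of b g) * k)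
  | true, false, _, g, hg, k, hk => by
    rw [Monoid.PushoutI.lift_of]
    exact lowerDominant_map_C_mul (fun h => hg ⟨⟨g, h⟩, rfl⟩) hk
  | false, true, _, g, hg, k, hk => by
    rw [Monoid.PushoutI.lift_of]
    exact upperDominant_mul g.2 (natDegree_pos_of_not_mem_range_BZtoBZX hg) hk.2
  | true, true, h, _, _, _, _ | false, false, h, _, _, _, _ => absurd rfl h

lemma amalgamHom_surjective : Function.Surjective amalgamHom := by
  have hUp : ∀ p, elUp ℤ[X] p ∈ amalgamHom.range.map (Esub ℤ[X]).subtype := fun p =>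
    ⟨amalgamHom (Monoid.PushoutI.of (φ := edges910) false ⟨elUp ℤ[X] p, elUp_mem_Bsub p⟩),
      ⟨_, rfl⟩, congrArg Subtype.val (Monoid.PushoutI.lift_of legs910 _ compat910 _)⟩
  have hw : wSL ℤ[X] ∈ amalgamHom.range.map (Esub ℤ[X]).subtype :=
    ⟨amalgamHom (Monoid.PushoutI.of (φ := edges910) true (wSL ℤ)), ⟨_, rfl⟩,
      (congrArg Subtype.val (Monoid.PushoutI.lift_of legs910 _ compat910 _)).trans
        (map_wSL Polynomial.C)⟩
  have hE : Esub ℤ[X] ≤ amalgamHom.range.map (Esub ℤ[X]).subtype := by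
    refine (Subgroup.closure_le _).mpr ?_
    rintro _ (⟨p, rfl⟩ | ⟨p, rfl⟩)
    · exact hUp p
    · rw [elLow_eq_conj_elUp]
      exact mul_mem (mul_mem hw (hUp _)) (inv_mem hw)
  intro y
  obtain ⟨_, ⟨g, rfl⟩, hg⟩ := hE y.2
  exact ⟨g, Subtype.ext hg⟩

end Paper

open Paper in
/-- The natural homomorphism `SL₂(ℤ) *_{B(ℤ)} B(ℤ[t]) → E₂(ℤ[t])`, induced by the inclusions,
is an isomorphism of groups. -/
theorem amalgam_E2_SL2Zt :
    Function.Bijective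
      (Monoid.PushoutI.lift legs910 (SLZtoE.comp (Bsub ℤ).subtype) compat910) :=
  ⟨Monoid.PushoutI.lift_injective_of_ping_pong _ pingPongState edges910_injective
    amalgamHom_comp_base_injective not_pingPongState_amalgamHom_base
    pingPongState_amalgamHom_of pingPongState_amalgamHom_of_mul,
    amalgamHom_surjective⟩
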